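/- arXiv:2405.13176 — 2 statements merged into one kernel-verified Lean document; each statement's English description precedes it below -/
import Mathlib

section
/- Let G be a finite simple graph and v ∈ nucleus(G). If there exists an independent set that is a critical independent set both in G and in the vertex-deleted subgraph G − v, then d(G) = d(G − v). -/
namespace AlmostBipartite

variable {V : Type*}

/-- The (open) neighborhood `N(X)` of a set of vertices: all vertices having a neighbor in `X`. -/
def nbhd (G : SimpleGraph V) (X : Set V) : Set V := {v | ∃ x ∈ X, G.Adj v x}

/-- The closed neighborhood `N[X] = X ∪ N(X)`. -/
def closedNbhd (G : SimpleGraph V) (X : Set V) : Set V := X ∪ nbhd G X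

/-- A set of vertices is independent: no two of its vertices are adjacent. -/
def IsIndepSet (G : SimpleGraph V) (S : Set V) : Prop :=
  ∀ ⦃a⦄, a ∈ S → ∀ ⦃b⦄, b ∈ S → ¬G.Adj a b

/-- The difference `d(X) = |X| - |N(X)|`. -/
noncomputable def diffOf (G : SimpleGraph V) (X : Set V) : ℤ :=
  (X.ncard : ℤ) - ((nbhd G X).ncard : ℤ)

/-- The critical difference `d(G)`: maximum of `d(I)` over independent sets `I`. -/
noncomputable def critDiff (G : SimpleGraph V) : ℤ :=
  sSup (diffOf G '' {S | IsIndepSet G S})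

/-- A critical independent set: an independent set `A` with `d(A) = d(G)`. -/
def IsCritIndep (G : SimpleGraph V) (A : Set V) : Prop :=
  IsIndepSet G A ∧ diffOf G A = critDiff G

/-- `diadem G` is the union of all critical independent sets of `G`. -/
def diadem (G : SimpleGraph V) : Set V := ⋃₀ {A | IsCritIndep G A}

/-- A maximum critical independent set: a critical independent set of maximum cardinality. -/
def IsMaxCritIndep (G : SimpleGraph V) (A : Set V) : Prop :=
  IsCritIndep G A ∧ ∀ B : Set V, IsCritIndep G B → B.ncard ≤ A.ncard

/-- `nucleus G` is the intersection of all maximum critical independent sets of `G`. -/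
def nucleus (G : SimpleGraph V) : Set V := ⋂₀ {A | IsMaxCritIndep G A}

/-- The independence number `α(G)`. -/
noncomputable def indepNum (G : SimpleGraph V) : ℕ :=
  sSup {n | ∃ S : Set V, IsIndepSet G S ∧ S.ncard = n}

/-- The critical independence number `α'(G)`: cardinality of a maximum critical independent set. -/
noncomputable def critIndepNum (G : SimpleGraph V) : ℕ :=
  sSup {n | ∃ S : Set V, IsCritIndep G S ∧ S.ncard = n}

/-- A maximum independent set. -/
def IsMaxIndep (G : SimpleGraph V) (S : Set V) : Prop :=
  IsIndepSet G S ∧ S.ncard = indepNum G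

/-- `corona G` is the union of all maximum independent sets of `G`. -/
def corona (G : SimpleGraph V) : Set V := ⋃₀ {S | IsMaxIndep G S}

/-- `core G` is the intersection of all maximum independent sets of `G`. -/
def core (G : SimpleGraph V) : Set V := ⋂₀ {S | IsMaxIndep G S}

/-- The matching number `μ(G)`: maximum size of a matching in `G`. -/
noncomputable def matchNum (G : SimpleGraph V) : ℕ :=
  sSup {n | ∃ M : SimpleGraph.Subgraph G, M.IsMatching ∧ M.edgeSet.ncard = n}

/-- `G` is a König-Egerváry graph if `α(G) + μ(G) = n(G)`. -/
def KonigEgervary (G : SimpleGraph V) : Prop :=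
  indepNum G + matchNum G = Nat.card V

/-- A closed walk which is an odd cycle. -/
def IsOddCycleWalk (G : SimpleGraph V) {u : V} (c : G.Walk u u) : Prop :=
  c.IsCycle ∧ Odd c.length

/-- `c` is the unique odd cycle of `G`: it is an odd cycle, and every odd cycle of `G`
has the same edge set as `c`.  A graph admitting such `c` is almost bipartite. -/
def IsUniqueOddCycle (G : SimpleGraph V) {u : V} (c : G.Walk u u) : Prop :=
  IsOddCycleWalk G c ∧
    ∀ (w : V) (c' : G.Walk w w), IsOddCycleWalk G c' →
      {e | e ∈ c'.edges} = {e | e ∈ c.edges}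

/-- The vertex-deleted subgraph `G - v`. -/
def deleteVert (G : SimpleGraph V) (v : V) := G.induce {w | w ≠ v}

/-- `ϱ_v(G)`: the number of vertices `v` such that `G - v` is a König-Egerváry graph. -/
noncomputable def rhoV (G : SimpleGraph V) : ℕ :=
  {v : V | KonigEgervary (deleteVert G v)}.ncard

end AlmostBipartite

open AlmostBipartite


section Helpers

variable {V : Type*} [Fintype V] {G : SimpleGraph V}

lemma nbhd_mono {X Y : Set V} (h : X ⊆ Y) : nbhd G X ⊆ nbhd G Y :=
  fun _ ⟨y, hy, hadj⟩ => ⟨y, h hy, hadj⟩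

lemma nbhd_union (X Y : Set V) : nbhd G (X ∪ Y) = nbhd G X ∪ nbhd G Y := by
  ext x
  constructor
  · rintro ⟨y, hy | hy, hadj⟩
    · exact Or.inl ⟨y, hy, hadj⟩
    · exact Or.inr ⟨y, hy, hadj⟩
  · rintro (⟨y, hy, hadj⟩ | ⟨y, hy, hadj⟩)
    · exact ⟨y, Or.inl hy, hadj⟩
    · exact ⟨y, Or.inr hy, hadj⟩

lemma indep_inter_nbhd {S : Set V} (hS : IsIndepSet G S) : S ∩ nbhd G S = ∅ := by
  ext x
  simp only [Set.mem_inter_iff, Set.mem_empty_iff_false, iff_false, not_and]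
  rintro hx ⟨y, hy, hadj⟩
  exact hS hx hy hadj

lemma diff_le_critDiff {S : Set V} (hS : IsIndepSet G S) : diffOf G S ≤ critDiff G :=
  le_csSup ((Set.toFinite _).image _).bddAbove ⟨S, hS, rfl⟩

/-- Zhang's observation: the difference of ANY set is at most the critical difference. -/
lemma diff_le_critDiff' (G : SimpleGraph V) (U : Set V) : diffOf G U ≤ critDiff G := by
  set W := U \ nbhd G U with hW
  have hWind : IsIndepSet G W := fun a ha b hb hadj => ha.2 ⟨b, hb.1, hadj⟩
  have h1 : nbhd G W ⊆ nbhd G U \ U := by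
    rintro x ⟨w, hw, hadj⟩
    exact ⟨⟨w, hw.1, hadj⟩, fun hxU => hw.2 ⟨x, hxU, hadj.symm⟩⟩
  have c1 : (U ∩ nbhd G U).ncard + W.ncard = U.ncard :=
    Set.ncard_inter_add_ncard_diff_eq_ncard U (nbhd G U)
  have c2 : (nbhd G W).ncard ≤ (nbhd G U \ U).ncard :=
    Set.ncard_le_ncard h1 (Set.toFinite _)
  have c3 : (nbhd G U ∩ U).ncard + (nbhd G U \ U).ncard = (nbhd G U).ncard :=
    Set.ncard_inter_add_ncard_diff_eq_ncard (nbhd G U) U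
  have c4 : (U ∩ nbhd G U).ncard = (nbhd G U ∩ U).ncard := by rw [Set.inter_comm]
  have := diff_le_critDiff hWind
  unfold diffOf at this ⊢
  omega

lemma critIndep_nonempty (G : SimpleGraph V) : ∃ A : Set V, IsCritIndep G A := by
  have hne : (diffOf G '' {S | IsIndepSet G S}).Nonempty :=
    ⟨diffOf G ∅, ∅, fun a ha => absurd ha (Set.notMem_empty a), rfl⟩
  have hfin : (diffOf G '' {S | IsIndepSet G S}).Finite := (Set.toFinite _).image _
  obtain ⟨S, hS, hSd⟩ := hne.csSup_mem hfin
  exact ⟨S, hS, hSd⟩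

lemma exists_maxCritIndep (G : SimpleGraph V) : ∃ A : Set V, IsMaxCritIndep G A := by
  obtain ⟨A₀, hA₀⟩ := critIndep_nonempty G
  obtain ⟨A, hA, hmax⟩ := Set.Finite.exists_maximalFor Set.ncard {B | IsCritIndep G B}
    (Set.toFinite _) ⟨A₀, hA₀⟩
  refine ⟨A, hA, fun B hB => ?_⟩
  by_contra hlt
  push_neg at hlt
  exact absurd (hmax hB hlt.le) (by omega)

end Helpers

section Hall
set_option linter.unusedSectionVars false
variable {V : Type*} [Fintype V] {G : SimpleGraph V}

/-- For a critical independent set `S`, there is a matching of `N(S)` into `S`. -/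
lemma crit_hall {S : Set V} (hS : IsCritIndep G S) :
    ∃ g : V → V, Set.InjOn g (nbhd G S) ∧ ∀ u ∈ nbhd G S, g u ∈ S ∧ G.Adj u (g u) := by
  classical
  haveI : Fintype ↥(nbhd G S) := Fintype.ofFinite _
  set t : ↥(nbhd G S) → Finset V :=
    fun u => ((S ∩ {x | G.Adj ↑u x}).toFinite).toFinset with ht
  have hcond : ∀ s : Finset ↥(nbhd G S), s.card ≤ (s.biUnion t).card := by
    intro s
    set R : Set V := Subtype.val '' (↑s : Set ↥(nbhd G S)) with hR
    have hRcard : R.ncard = s.card := by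
      rw [Set.ncard_image_of_injective _ Subtype.val_injective, Set.ncard_coe_finset]
    have hRsub : R ⊆ nbhd G S := by rintro x ⟨u, _, rfl⟩; exact u.2
    -- S ∩ N(R) embeds into the biUnion
    have hsub : S ∩ nbhd G R ⊆ ↑(s.biUnion t) := by
      rintro x ⟨hxS, u', ⟨u, hu, rfl⟩, hadj⟩
      simp only [Finset.coe_biUnion, Set.mem_iUnion, Finset.mem_coe]
      exact ⟨u, hu, by simp only [ht, Set.Finite.mem_toFinset]; exact ⟨hxS, hadj.symm⟩⟩
    have hcard2 : (S ∩ nbhd G R).ncard ≤ (s.biUnion t).card := by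
      rw [← Set.ncard_coe_finset (s.biUnion t)]
      exact Set.ncard_le_ncard hsub (Set.toFinite _)
    -- key counting using criticality of S
    have hkey : R.ncard ≤ (S ∩ nbhd G R).ncard := by
      set S' := S \ nbhd G R with hS'
      have hS'ind : IsIndepSet G S' := fun a ha b hb hadj => hS.1 ha.1 hb.1 hadj
      have h1 : nbhd G S' ⊆ nbhd G S \ R := by
        rintro x ⟨y, hy, hadj⟩
        exact ⟨⟨y, hy.1, hadj⟩, fun hxR => hy.2 ⟨x, hxR, hadj.symm⟩⟩
      have c1 : (S ∩ nbhd G R).ncard + S'.ncard = S.ncard :=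
        Set.ncard_inter_add_ncard_diff_eq_ncard S (nbhd G R)
      have c2 : (nbhd G S').ncard ≤ (nbhd G S \ R).ncard :=
        Set.ncard_le_ncard h1 (Set.toFinite _)
      have c3 : (nbhd G S \ R).ncard + R.ncard = (nbhd G S).ncard :=
        Set.ncard_diff_add_ncard_of_subset hRsub (Set.toFinite _)
      have hle := diff_le_critDiff hS'ind
      have heq := hS.2
      unfold diffOf at hle heq
      omega
    omega
  obtain ⟨f, hfinj, hft⟩ :=
    (Finset.all_card_le_biUnion_card_iff_existsInjective' t).mp hcond
  refine ⟨fun x => if h : x ∈ nbhd G S then f ⟨x, h⟩ else x, ?_, ?_⟩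
  · intro a ha b hb hab
    simp only [dif_pos ha, dif_pos hb] at hab
    exact congrArg Subtype.val (hfinj hab)
  · intro u hu
    have := hft ⟨u, hu⟩
    rw [ht, Set.Finite.mem_toFinset] at this
    simp only [dif_pos hu]
    exact ⟨this.1, this.2⟩

end Hall

section Main
set_option linter.unusedSectionVars false
variable {V : Type*} [Fintype V] {G : SimpleGraph V}

lemma cross_le {A S : Set V} (hA : IsIndepSet G A) (hS : IsCritIndep G S) :
    (A ∩ nbhd G S).ncard ≤ (S ∩ nbhd G A).ncard := by
  obtain ⟨g, hginj, hg⟩ := crit_hall hS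
  refine Set.ncard_le_ncard_of_injOn g (fun a ha => ?_)
    (hginj.mono Set.inter_subset_right) (Set.toFinite _)
  obtain ⟨hgS, hadj⟩ := hg a ha.2
  exact ⟨hgS, a, ha.1, hadj.symm⟩

lemma cross_eq {A S : Set V} (hA : IsCritIndep G A) (hS : IsCritIndep G S) :
    (A ∩ nbhd G S).ncard = (S ∩ nbhd G A).ncard :=
  le_antisymm (cross_le hA.1 hS) (cross_le hS.1 hA)

/-- Forced equalities for a pair of critical independent sets. -/
lemma forced_eq {A S : Set V} (hA : IsCritIndep G A) (hS : IsCritIndep G S) :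
    diffOf G (A ∩ S) = critDiff G ∧
      (nbhd G (A ∩ S)).ncard = (nbhd G A ∩ nbhd G S).ncard := by
  have e1 : (A ∪ S).ncard + (A ∩ S).ncard = A.ncard + S.ncard :=
    Set.ncard_union_add_ncard_inter A S (Set.toFinite _) (Set.toFinite _)
  have e2 : (nbhd G A ∪ nbhd G S).ncard + (nbhd G A ∩ nbhd G S).ncard
      = (nbhd G A).ncard + (nbhd G S).ncard :=
    Set.ncard_union_add_ncard_inter _ _ (Set.toFinite _) (Set.toFinite _)
  have e3 : nbhd G (A ∪ S) = nbhd G A ∪ nbhd G S := nbhd_union A S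
  have i1 := diff_le_critDiff' G (A ∪ S)
  have i2 : (nbhd G (A ∩ S)).ncard ≤ (nbhd G A ∩ nbhd G S).ncard := by
    refine Set.ncard_le_ncard (fun x ⟨y, hy, hadj⟩ => ?_) (Set.toFinite _)
    exact ⟨⟨y, hy.1, hadj⟩, ⟨y, hy.2, hadj⟩⟩
  have i3 : diffOf G (A ∩ S) ≤ critDiff G :=
    diff_le_critDiff (fun a ha b hb => hA.1 ha.1 hb.1)
  have hA2 := hA.2; have hS2 := hS.2
  unfold diffOf at i1 i2 i3 hA2 hS2 ⊢
  rw [e3] at i1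
  omega

/-- Key lemma: if `v` belongs to every maximum critical independent set, then `v` has no
neighbor in any critical independent set. -/
lemma key_lemma {v : V} (hv : ∀ A : Set V, IsMaxCritIndep G A → v ∈ A)
    {S : Set V} (hS : IsCritIndep G S) : v ∉ nbhd G S := by
  obtain ⟨A, hAc, hAmax⟩ := exists_maxCritIndep G
  set NS := nbhd G S with hNS
  set NA := nbhd G A with hNA
  set T : Set V := S ∪ (A \ (S ∪ NS)) with hT
  -- T is independent
  have hTind : IsIndepSet G T := by
    rintro a (haS | haA) b (hbS | hbA) hadj
    · exact hS.1 haS hbS hadj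
    · exact hbA.2 (Or.inr ⟨a, haS, hadj.symm⟩) 
    · exact haA.2 (Or.inr ⟨b, hbS, hadj⟩)
    · exact hAc.1 haA.1 hbA.1 hadj
  -- disjointness facts
  have hSNS : S ∩ NS = ∅ := indep_inter_nbhd hS.1
  have hANA : A ∩ NA = ∅ := indep_inter_nbhd hAc.1
  -- |T| = |S| + |A| - |A∩S| - |A∩NS|
  have ct1 : T.ncard = S.ncard + (A \ (S ∪ NS)).ncard := by
    rw [hT, Set.ncard_union_eq _ (Set.toFinite _) (Set.toFinite _)]
    rw [Set.disjoint_left]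
    rintro x hxS ⟨_, hx⟩
    exact hx (Or.inl hxS)
  have ct2 : (A ∩ (S ∪ NS)).ncard + (A \ (S ∪ NS)).ncard = A.ncard :=
    Set.ncard_inter_add_ncard_diff_eq_ncard A (S ∪ NS)
  have ct3 : (A ∩ (S ∪ NS)).ncard = (A ∩ S).ncard + (A ∩ NS).ncard := by
    rw [Set.inter_union_distrib_left]
    refine Set.ncard_union_eq ?_ (Set.toFinite _) (Set.toFinite _)
    rw [Set.disjoint_left]
    rintro x ⟨hxA, hxS⟩ ⟨_, hxNS⟩
    have hx : x ∈ S ∩ NS := ⟨hxS, hxNS⟩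
    rw [hSNS] at hx
    exact hx
  -- N(T) ⊆ NS ∪ (NA \ S)
  have hNT : nbhd G T ⊆ NS ∪ (NA \ S) := by
    rintro x ⟨y, hyT, hadj⟩
    rcases hyT with hyS | hyA
    · exact Or.inl ⟨y, hyS, hadj⟩
    · refine Or.inr ⟨⟨y, hyA.1, hadj⟩, fun hxS => ?_⟩
      exact hyA.2 (Or.inr ⟨x, hxS, hadj.symm⟩)
  have cn1 : (nbhd G T).ncard ≤ (NS ∪ (NA \ S)).ncard :=
    Set.ncard_le_ncard hNT (Set.toFinite _)
  have cn2 : (NS ∪ (NA \ S)).ncard + (NS ∩ (NA \ S)).ncard = NS.ncard + (NA \ S).ncard :=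
    Set.ncard_union_add_ncard_inter _ _ (Set.toFinite _) (Set.toFinite _)
  have cn3 : NS ∩ (NA \ S) = NS ∩ NA := by
    ext x
    constructor
    · rintro ⟨h1, h2, _⟩; exact ⟨h1, h2⟩
    · rintro ⟨h1, h2⟩
      refine ⟨h1, h2, fun hxS => ?_⟩
      have hx : x ∈ S ∩ NS := ⟨hxS, h1⟩
      rw [hSNS] at hx
      exact hx
  have cn4 : (NA ∩ S).ncard + (NA \ S).ncard = NA.ncard :=
    Set.ncard_inter_add_ncard_diff_eq_ncard NA S
  rw [cn3] at cn2
  have hcomm3 : (NA ∩ S).ncard = (S ∩ NA).ncard := by rw [Set.inter_comm]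
  -- cross equality and forced equalities
  have hk : (A ∩ NS).ncard = (S ∩ NA).ncard := cross_eq hAc hS
  obtain ⟨hd, hn⟩ := forced_eq hAc hS
  -- |S∩NA| + |S∩A| ≤ |S|
  have hsplit : (S ∩ NA).ncard + (S ∩ A).ncard ≤ S.ncard := by
    have : (S ∩ NA) ∪ (S ∩ A) ⊆ S := by
      rintro x (⟨h, _⟩ | ⟨h, _⟩) <;> exact h
    have hdisj : Disjoint (S ∩ NA) (S ∩ A) := by
      rw [Set.disjoint_left]
      rintro x ⟨_, hxNA⟩ ⟨_, hxA⟩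
      have hx : x ∈ A ∩ NA := ⟨hxA, hxNA⟩
      rw [hANA] at hx
      exact hx
    calc (S ∩ NA).ncard + (S ∩ A).ncard
        = ((S ∩ NA) ∪ (S ∩ A)).ncard :=
          (Set.ncard_union_eq hdisj (Set.toFinite _) (Set.toFinite _)).symm
      _ ≤ S.ncard := Set.ncard_le_ncard this (Set.toFinite _)
  have hcomm1 : (S ∩ A).ncard = (A ∩ S).ncard := by rw [Set.inter_comm]
  have hcomm2 : (NS ∩ NA).ncard = (NA ∩ NS).ncard := by rw [Set.inter_comm]
  -- T is critical
  have hdT : diffOf G T ≤ critDiff G := diff_le_critDiff hTind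
  have hA2 := hAc.2; have hS2 := hS.2
  rw [← hNA, ← hNS] at hn
  unfold diffOf at hdT hd hA2 hS2
  rw [← hNA] at hA2
  rw [← hNS] at hS2
  have hTcrit : diffOf G T = critDiff G := by unfold diffOf; omega
  have hTge : A.ncard ≤ T.ncard := by omega
  have hTmax : IsMaxCritIndep G T :=
    ⟨⟨hTind, hTcrit⟩, fun B hB => (hAmax B hB).trans hTge⟩
  have hvT : v ∈ T := hv T hTmax
  rintro ⟨b, hbS, hadj⟩
  exact hTind hvT (Or.inl hbS) hadj

end Main

/-- If `v ∈ nucleus G` and there exists an independent set that is critical both in `G` and in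
`G - v`, then `d(G) = d(G - v)`. -/
theorem stmt10 {V : Type*} [Fintype V] (G : SimpleGraph V) (v : V)
    (hv : v ∈ nucleus G)
    (h : ∃ B, IsCritIndep (deleteVert G v) B ∧ IsCritIndep G (Subtype.val '' B)) :
    critDiff G = critDiff (deleteVert G v) := by
  obtain ⟨B, hB1, hB2⟩ := h
  have hv' : ∀ A : Set V, IsMaxCritIndep G A → v ∈ A := fun A hA =>
    Set.mem_sInter.mp hv A hA
  have hvn : v ∉ nbhd G (Subtype.val '' B) := key_lemma hv' hB2
  have hnb : nbhd G (Subtype.val '' B) = Subtype.val '' nbhd (deleteVert G v) B := by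
    ext y
    constructor
    · rintro ⟨c, ⟨b, hbB, rfl⟩, hadj⟩
      have hy : y ≠ v := by
        rintro rfl
        exact hvn ⟨_, ⟨b, hbB, rfl⟩, hadj⟩
      exact ⟨⟨y, hy⟩, ⟨b, hbB, hadj⟩, rfl⟩
    · rintro ⟨w, ⟨b, hbB, hadj⟩, rfl⟩
      exact ⟨↑b, ⟨b, hbB, rfl⟩, hadj⟩
  have hc1 : (Subtype.val '' B).ncard = B.ncard :=
    Set.ncard_image_of_injective B Subtype.val_injective
  have hc2 : (nbhd G (Subtype.val '' B)).ncard = (nbhd (deleteVert G v) B).ncard := by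
    rw [hnb, Set.ncard_image_of_injective _ Subtype.val_injective]
  have hdeq : diffOf G (Subtype.val '' B) = diffOf (deleteVert G v) B := by
    unfold diffOf; rw [hc1, hc2]
  rw [← hB2.2, hdeq, hB1.2]
end

section
/- Let G be a finite simple graph and v ∈ V(G). If v ∉ N(diadem(G)), then d(G) ≥ d(G − v). -/
/-!
Let `A` be a critical independent set of `G - v`, viewed as a set of vertices of `G`. It stays
independent in `G`, and its neighbourhood in `G - v` is its neighbourhood in `G` minus `v`.
If `v ∉ N(A)`, then `d_{G-v}(A) = d_G(A) ≤ d(G)`. If `v ∈ N(A)`, then `d_{G-v}(A) = d_G(A) + 1`,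
but now `A` cannot be critical in `G`, since otherwise `A ⊆ diadem G` and `v ∈ N(diadem G)`;
hence `d_G(A) ≤ d(G) - 1`.
-/

namespace AlmostBipartite

variable {V : Type*} (G : SimpleGraph V)

theorem nbhd_mono {X Y : Set V} (h : X ⊆ Y) : nbhd G X ⊆ nbhd G Y :=
  fun _ ⟨x, hx, hadj⟩ => ⟨x, h hx, hadj⟩

theorem IsCritIndep.subset_diadem {A : Set V} (hA : IsCritIndep G A) : A ⊆ diadem G :=
  Set.subset_sUnion_of_mem hA

section Finite

variable [Finite V]

theorem diffOf_le_critDiff {A : Set V} (hA : IsIndepSet G A) : diffOf G A ≤ critDiff G :=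
  le_csSup ((Set.toFinite _).image _).bddAbove (Set.mem_image_of_mem _ hA)

theorem exists_isCritIndep : ∃ A : Set V, IsCritIndep G A := by
  have hne : (diffOf G '' {S | IsIndepSet G S}).Nonempty :=
    ⟨_, Set.mem_image_of_mem _ (fun _ h => h.elim : IsIndepSet G ∅)⟩
  obtain ⟨A, hA, hAd⟩ := hne.csSup_mem ((Set.toFinite _).image _)
  exact ⟨A, hA, hAd⟩

theorem diffOf_lt_critDiff_of_mem_nbhd {A : Set V} {u : V} (hA : IsIndepSet G A)
    (huA : u ∈ nbhd G A) (hu : u ∉ nbhd G (diadem G)) : diffOf G A < critDiff G := by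
  refine (diffOf_le_critDiff G hA).lt_of_ne fun hcrit => hu ?_
  exact nbhd_mono G (IsCritIndep.subset_diadem G ⟨hA, hcrit⟩) huA

end Finite

section Induce

variable {G} {s : Set V}

theorem IsIndepSet.image_val {A : Set s} (hA : IsIndepSet (G.induce s) A) :
    IsIndepSet G (Subtype.val '' A) := by
  rintro _ ⟨a, ha, rfl⟩ _ ⟨b, hb, rfl⟩
  exact hA ha hb

theorem image_val_nbhd_induce (A : Set s) :
    Subtype.val '' nbhd (G.induce s) A = nbhd G (Subtype.val '' A) ∩ s := by
  ext w
  constructor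
  · rintro ⟨⟨w, hw⟩, ⟨x, hx, hadj⟩, rfl⟩
    exact ⟨⟨x, ⟨x, hx, rfl⟩, hadj⟩, hw⟩
  · rintro ⟨⟨_, ⟨x, hx, rfl⟩, hadj⟩, hw⟩
    exact ⟨⟨w, hw⟩, ⟨x, hx, hadj⟩, rfl⟩

theorem diffOf_induce (A : Set s) :
    diffOf (G.induce s) A =
      ((Subtype.val '' A).ncard : ℤ) - ((nbhd G (Subtype.val '' A) ∩ s).ncard : ℤ) := by
  rw [diffOf, ← image_val_nbhd_induce, Set.ncard_image_of_injective _ Subtype.val_injective,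
    Set.ncard_image_of_injective _ Subtype.val_injective]

end Induce

theorem diffOf_deleteVert_of_notMem {v : V} {A : Set {w | w ≠ v}}
    (hv : v ∉ nbhd G (Subtype.val '' A)) :
    diffOf (deleteVert G v) A = diffOf G (Subtype.val '' A) := by
  rw [deleteVert, diffOf_induce, diffOf]
  congr 3
  exact Set.inter_eq_left.mpr fun w hw (hwv : w = v) => hv (hwv ▸ hw)

theorem diffOf_deleteVert_of_mem [Finite V] {v : V} {A : Set {w | w ≠ v}}
    (hv : v ∈ nbhd G (Subtype.val '' A)) :
    diffOf (deleteVert G v) A = diffOf G (Subtype.val '' A) + 1 := by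
  have hcard := Set.ncard_sdiff_singleton_add_one hv
  have hsdiff : nbhd G (Subtype.val '' A) ∩ {w | w ≠ v} = nbhd G (Subtype.val '' A) \ {v} := rfl
  rw [deleteVert, diffOf_induce, diffOf, ← hcard, hsdiff]
  push_cast
  ring

end AlmostBipartite

open AlmostBipartite

/-- If `v ∉ N(diadem G)`, then `d(G) ≥ d(G - v)`. -/
theorem stmt11 {V : Type*} [Fintype V] (G : SimpleGraph V) (v : V)
    (hv : v ∉ nbhd G (diadem G)) :
    critDiff G ≥ critDiff (deleteVert G v) := by
  obtain ⟨A, hA, hAd⟩ := exists_isCritIndep (deleteVert G v)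
  rw [ge_iff_le, ← hAd]
  by_cases hvA : v ∈ nbhd G (Subtype.val '' A)
  · rw [diffOf_deleteVert_of_mem G hvA]
    linarith [diffOf_lt_critDiff_of_mem_nbhd G hA.image_val hvA hv]
  · rw [diffOf_deleteVert_of_notMem G hvA]
    exact diffOf_le_critDiff G hA.image_val
end
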